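/- arXiv:1911.05563 — 5 statements merged into one kernel-verified Lean document; each statement's English description precedes it below -/
import Mathlib

section
/- Gentle measurement lemma: if ρ is a subnormalized quantum state (ρ ≥ 0, tr ρ ≤ 1), Q satisfies 0 ≤ Q ≤ I, and tr(Qρ) ≥ 1 − δ, then the purified distance between ρ and Q^{1/2} ρ Q^{1/2} is at most √(2δ). -/
open Matrix
open scoped ComplexOrder Classical

noncomputable section

variable {n : Type*} [Fintype n] [DecidableEq n]

/-- The positive semidefinite square root of a positive semidefinite matrix
(the definition `Matrix.PosSemidef.sqrt` of the older Mathlib, since removed). -/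
def Matrix.PosSemidef.sqrt {𝕜 : Type*} [RCLike 𝕜] {A : Matrix n n 𝕜} (hA : A.PosSemidef) :
    Matrix n n 𝕜 :=
  (hA.1.eigenvectorUnitary : Matrix n n 𝕜) * diagonal ((↑) ∘ (√·) ∘ hA.1.eigenvalues) *
    (star hA.1.eigenvectorUnitary : Matrix n n 𝕜)

/-- Trace norm `‖A‖₁ = tr √(A†A)`. -/
def traceNorm (A : Matrix n n ℂ) : ℝ :=
  ((Matrix.posSemidef_conjTranspose_mul_self A).sqrt.trace).re

/-- Positive square root of a positive semidefinite matrix (0 if not PSD). -/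
def msqrt (A : Matrix n n ℂ) : Matrix n n ℂ :=
  if h : A.PosSemidef then h.sqrt else 0

/-- Generalized fidelity of subnormalized states:
`F̄(ρ,σ) = ‖√ρ √σ‖₁ + √((1 − tr ρ)(1 − tr σ))`. -/
def genFid (ρ σ : Matrix n n ℂ) : ℝ :=
  traceNorm (msqrt ρ * msqrt σ) + Real.sqrt ((1 - ρ.trace.re) * (1 - σ.trace.re))

/-- Purified distance `P(ρ,σ) = √(1 − F̄(ρ,σ)²)`. -/
def purDist (ρ σ : Matrix n n ℂ) : ℝ :=
  Real.sqrt (1 - (genFid ρ σ) ^ 2)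

open scoped MatrixOrder in
lemma Matrix.PosSemidef.sqrt_eq_cfc {A : Matrix n n ℂ} (hA : A.PosSemidef) :
    hA.sqrt = CFC.sqrt A := by
  have h0 : 0 ≤ A := hA.nonneg
  rw [CFC.sqrt_eq_cfc, cfc_nnreal_eq_real _ A h0, hA.1.cfc_eq]
  simp only [IsHermitian.cfc, Matrix.PosSemidef.sqrt, Unitary.conjStarAlgAut_apply]
  congr 3
  funext i
  simp [Real.coe_toNNReal', max_eq_left (hA.eigenvalues_nonneg i)]

open scoped MatrixOrder in
lemma Matrix.PosSemidef.posSemidef_sqrt {A : Matrix n n ℂ} (hA : A.PosSemidef) :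
    hA.sqrt.PosSemidef := by
  rw [hA.sqrt_eq_cfc]; exact (CFC.sqrt_nonneg A).posSemidef

open scoped MatrixOrder in
lemma Matrix.PosSemidef.sqrt_mul_self {A : Matrix n n ℂ} (hA : A.PosSemidef) :
    hA.sqrt * hA.sqrt = A := by
  rw [hA.sqrt_eq_cfc]; exact CFC.sqrt_mul_sqrt_self A hA.nonneg

open scoped MatrixOrder in
lemma Matrix.PosSemidef.eq_sqrt_of_sq_eq {A B : Matrix n n ℂ} (hA : A.PosSemidef)
    (hB : B.PosSemidef) (hAB : A ^ 2 = B) : A = hB.sqrt := by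
  rw [hB.sqrt_eq_cfc]; exact (CFC.sqrt_unique (by rw [← sq]; exact hAB) hA.nonneg).symm

lemma Matrix.IsHermitian.star_mul_self_mul_eq_diagonal {A : Matrix n n ℂ} (hA : A.IsHermitian) :
    star (hA.eigenvectorUnitary : Matrix n n ℂ) * A * (hA.eigenvectorUnitary : Matrix n n ℂ)
      = diagonal (RCLike.ofReal ∘ hA.eigenvalues) := by
  have := hA.conjStarAlgAut_star_eigenvectorUnitary
  simpa [Unitary.conjStarAlgAut_star_apply] using this


open Polynomial

/-- Conjugation by a unitary matrix as an `ℝ`-algebra hom. -/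
def conjAlgHom (U : Matrix.unitaryGroup n ℂ) : Matrix n n ℂ →ₐ[ℝ] Matrix n n ℂ where
  toFun X := (U : Matrix n n ℂ) * X * (star U : Matrix n n ℂ)
  map_one' := by
    show (U : Matrix n n ℂ) * 1 * (star U : Matrix n n ℂ) = 1
    rw [mul_one]
    exact Matrix.mem_unitaryGroup_iff.mp U.2
  map_mul' X Y := by
    have h : (star U : Matrix n n ℂ) * U = 1 := Matrix.mem_unitaryGroup_iff'.mp U.2
    calc (U : Matrix n n ℂ) * (X * Y) * (star U : Matrix n n ℂ)
        = (U : Matrix n n ℂ) * X * ((star U : Matrix n n ℂ) * U) * Y * (star U : Matrix n n ℂ) := by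
          rw [h, mul_one]; noncomm_ring
      _ = ((U : Matrix n n ℂ) * X * (star U : Matrix n n ℂ)) *
          ((U : Matrix n n ℂ) * Y * (star U : Matrix n n ℂ)) := by noncomm_ring
  map_zero' := by simp
  map_add' X Y := by noncomm_ring
  commutes' r := by
    have hU : (U : Matrix n n ℂ) * (star U : Matrix n n ℂ) = 1 :=
      Matrix.mem_unitaryGroup_iff.mp U.2
    simp [Algebra.algebraMap_eq_smul_one, Matrix.mul_smul, Matrix.smul_mul, hU]

lemma aeval_conj (U : Matrix.unitaryGroup n ℂ) (D : Matrix n n ℂ) (p : ℝ[X]) :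
    aeval ((U : Matrix n n ℂ) * D * (star U : Matrix n n ℂ)) p
      = (U : Matrix n n ℂ) * aeval D p * (star U : Matrix n n ℂ) :=
  aeval_algHom_apply (conjAlgHom U) D p

lemma aeval_diag (d : n → ℂ) (p : ℝ[X]) :
    aeval (Matrix.diagonal d) p = Matrix.diagonal (fun i => aeval (d i) p) := by
  have h1 : aeval ((Matrix.diagonalAlgHom ℝ : (n → ℂ) →ₐ[ℝ] Matrix n n ℂ) d) p
      = (Matrix.diagonalAlgHom ℝ : (n → ℂ) →ₐ[ℝ] Matrix n n ℂ) (aeval d p) := aeval_algHom_apply _ d p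
  have h2 : (aeval d p : n → ℂ) = fun i => aeval (d i) p := by
    funext i
    exact (aeval_algHom_apply (Pi.evalAlgHom ℝ (fun _ => ℂ) i) d p).symm
  rw [h2] at h1; exact h1

lemma sqrt_eq_aeval {M : Matrix n n ℂ} (hM : M.PosSemidef) (p : ℝ[X])
    (hp : ∀ i, p.eval (hM.1.eigenvalues i) = Real.sqrt (hM.1.eigenvalues i)) :
    hM.sqrt = aeval M p := by
  conv_rhs => rw [hM.1.spectral_theorem, Unitary.conjStarAlgAut_apply]
  rw [show (star hM.1.eigenvectorUnitary : Matrix n n ℂ)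
      = (star (hM.1.eigenvectorUnitary : Matrix n n ℂ)) from rfl]
  rw [_root_.aeval_conj, aeval_diag, Matrix.PosSemidef.sqrt]
  have hfun : (RCLike.ofReal ∘ Real.sqrt ∘ hM.1.eigenvalues : n → ℂ)
      = fun i => aeval ((RCLike.ofReal ∘ hM.1.eigenvalues : n → ℂ) i) p := by
    funext i
    show ((Real.sqrt (hM.1.eigenvalues i) : ℝ) : ℂ) = aeval ((hM.1.eigenvalues i : ℝ) : ℂ) p
    rw [show ((hM.1.eigenvalues i : ℝ) : ℂ) = algebraMap ℝ ℂ (hM.1.eigenvalues i) from rfl,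
      aeval_algebraMap_apply_eq_algebraMap_eval, hp i]
    rfl
  rw [hfun]

lemma pow_succ_conj (A : Matrix n n ℂ) (k : ℕ) :
    (Aᴴ * A) ^ (k + 1) = Aᴴ * ((A * Aᴴ) ^ k * A) := by
  induction k with
  | zero => simp
  | succ k ih => simp only [pow_succ, ih]; noncomm_ring

lemma trace_pow_conj (A : Matrix n n ℂ) (k : ℕ) :
    ((Aᴴ * A) ^ k).trace = ((A * Aᴴ) ^ k).trace := by
  cases k with
  | zero => rfl
  | succ k =>
    rw [pow_succ_conj, Matrix.trace_mul_comm, mul_assoc, ← pow_succ]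

lemma trace_aeval_conj (A : Matrix n n ℂ) (p : ℝ[X]) :
    (aeval (Aᴴ * A) p).trace = (aeval (A * Aᴴ) p).trace := by
  induction p using Polynomial.induction_on' with
  | add p q hp hq => simp [hp, hq]
  | monomial k c =>
    simp only [aeval_monomial, Algebra.algebraMap_eq_smul_one, smul_mul_assoc, one_mul,
      Matrix.trace_smul, trace_pow_conj A k]

lemma trace_sqrt_conj (A : Matrix n n ℂ) :
    (Matrix.posSemidef_conjTranspose_mul_self A).sqrt.trace
      = (Matrix.posSemidef_self_mul_conjTranspose A).sqrt.trace := by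
  set h1 := Matrix.posSemidef_conjTranspose_mul_self A
  set h2 := Matrix.posSemidef_self_mul_conjTranspose A
  set s : Finset ℝ := (Finset.univ.image h1.1.eigenvalues) ∪ (Finset.univ.image h2.1.eigenvalues)
    with hs
  have hinj : Set.InjOn id (s : Set ℝ) := Set.injOn_id _
  set p := Lagrange.interpolate s id Real.sqrt with hp
  have hnode : ∀ x ∈ s, p.eval x = Real.sqrt x := fun x hx =>
    Lagrange.eval_interpolate_at_node _ hinj hx
  rw [sqrt_eq_aeval h1 p fun i => hnode _ (Finset.mem_union_left _
      (Finset.mem_image_of_mem _ (Finset.mem_univ i))),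
    sqrt_eq_aeval h2 p fun i => hnode _ (Finset.mem_union_right _
      (Finset.mem_image_of_mem _ (Finset.mem_univ i))),
    trace_aeval_conj]

lemma psd_trace_nonneg {M : Matrix n n ℂ} (hM : M.PosSemidef) : 0 ≤ M.trace := by
  rw [Matrix.trace]
  refine Finset.sum_nonneg fun i _ => ?_
  exact hM.diag_nonneg

lemma psd_trace_re_nonneg {M : Matrix n n ℂ} (hM : M.PosSemidef) : 0 ≤ M.trace.re :=
  (Complex.le_def.mp (psd_trace_nonneg hM)).1

lemma psd_trace_mul_nonneg {A B : Matrix n n ℂ} (hA : A.PosSemidef) (hB : B.PosSemidef) :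
    0 ≤ (A * B).trace := by
  have h : A * B = hA.sqrt * (hA.sqrt * B) := by rw [← mul_assoc, hA.sqrt_mul_self]
  rw [h, Matrix.trace_mul_comm]
  have hpsd : ((hA.sqrt * B) * hA.sqrt).PosSemidef := by
    have := hB.mul_mul_conjTranspose_same hA.sqrt
    rwa [hA.posSemidef_sqrt.1] at this
  exact psd_trace_nonneg hpsd

lemma eigenvalues_le_one {Q : Matrix n n ℂ} (hQ : Q.PosSemidef)
    (hQI : ((1 : Matrix n n ℂ) - Q).PosSemidef) (i : n) : hQ.1.eigenvalues i ≤ 1 := by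
  set U : Matrix n n ℂ := (hQ.1.eigenvectorUnitary : Matrix n n ℂ)
  have hU' : star U * U = 1 := Matrix.mem_unitaryGroup_iff'.mp hQ.1.eigenvectorUnitary.2
  have hD : ((star U)ᴴᴴ * ((1 : Matrix n n ℂ) - Q) * U).PosSemidef := by
    rw [Matrix.conjTranspose_conjTranspose]
    exact hQI.conjTranspose_mul_mul_same (B := U)
  rw [Matrix.conjTranspose_conjTranspose] at hD
  have heq : star U * ((1 : Matrix n n ℂ) - Q) * U
      = Matrix.diagonal (fun j => 1 - (hQ.1.eigenvalues j : ℂ)) := by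
    rw [Matrix.mul_sub, Matrix.sub_mul, Matrix.mul_one, hU',
      hQ.1.star_mul_self_mul_eq_diagonal]
    rw [← Matrix.diagonal_one, Matrix.diagonal_sub]
    rfl
  rw [heq] at hD
  have := Matrix.posSemidef_diagonal_iff.mp hD i
  rw [show (1 : ℂ) - (hQ.1.eigenvalues i : ℂ) = ((1 - hQ.1.eigenvalues i : ℝ) : ℂ) by
    push_cast; ring] at this
  have := Complex.zero_le_real.mp this
  linarith

lemma one_sub_sqrt_psd {Q : Matrix n n ℂ} (hQ : Q.PosSemidef)
    (hQI : ((1 : Matrix n n ℂ) - Q).PosSemidef) :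
    ((1 : Matrix n n ℂ) - hQ.sqrt).PosSemidef := by
  set U : Matrix n n ℂ := (hQ.1.eigenvectorUnitary : Matrix n n ℂ) with hUdef
  have hU : U * star U = 1 := Matrix.mem_unitaryGroup_iff.mp hQ.1.eigenvectorUnitary.2
  have key : (1 : Matrix n n ℂ) - hQ.sqrt
      = U * Matrix.diagonal (fun j => 1 - ((Real.sqrt (hQ.1.eigenvalues j) : ℝ) : ℂ)) * star U := by
    rw [Matrix.PosSemidef.sqrt]
    rw [show (Matrix.diagonal (fun j => 1 - ((Real.sqrt (hQ.1.eigenvalues j) : ℝ) : ℂ)))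
        = 1 - Matrix.diagonal ((↑) ∘ Real.sqrt ∘ hQ.1.eigenvalues) by
      rw [← Matrix.diagonal_one, Matrix.diagonal_sub]; rfl]
    rw [Matrix.mul_sub, Matrix.sub_mul, Matrix.mul_one, hU]
    rfl
  rw [key, show (star U : Matrix n n ℂ) = Uᴴ from rfl]
  refine Matrix.PosSemidef.mul_mul_conjTranspose_same ?_ U
  refine Matrix.posSemidef_diagonal_iff.mpr fun j => ?_
  rw [show (1 : ℂ) - ((Real.sqrt (hQ.1.eigenvalues j) : ℝ) : ℂ)
      = ((1 - Real.sqrt (hQ.1.eigenvalues j) : ℝ) : ℂ) by push_cast; ring]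
  rw [Complex.zero_le_real]
  have h1 : Real.sqrt (hQ.1.eigenvalues j) ≤ 1 :=
    Real.sqrt_le_one.mpr (eigenvalues_le_one hQ hQI j)
  linarith

lemma sqrt_sub_psd {Q : Matrix n n ℂ} (hQ : Q.PosSemidef)
    (hQI : ((1 : Matrix n n ℂ) - Q).PosSemidef) : (hQ.sqrt - Q).PosSemidef := by
  set R := hQ.sqrt with hR
  have hRpsd := hQ.posSemidef_sqrt
  set r := hRpsd.sqrt with hr
  have h1R : ((1 : Matrix n n ℂ) - R).PosSemidef := one_sub_sqrt_psd hQ hQI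
  have key : R - Q = r * ((1 : Matrix n n ℂ) - R) * rᴴ := by
    rw [hRpsd.posSemidef_sqrt.1]
    rw [Matrix.mul_sub, Matrix.sub_mul, Matrix.mul_one]
    rw [hRpsd.sqrt_mul_self]
    congr 1
    calc Q = R * R := hQ.sqrt_mul_self.symm
      _ = (r * r) * (r * r) := by rw [hRpsd.sqrt_mul_self]
      _ = r * (r * r) * r := by noncomm_ring
      _ = r * R * r := by rw [hRpsd.sqrt_mul_self]
  rw [show hQ.sqrt - Q = R - Q from rfl, key]
  exact h1R.mul_mul_conjTranspose_same r

/-- **Gentle measurement lemma.** If `ρ` is a subnormalized state, `0 ≤ Q ≤ I` and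
`tr(Qρ) ≥ 1 − δ`, then `P(ρ, Q^{1/2} ρ Q^{1/2}) ≤ √(2δ)`. -/
theorem gentle_measurement (ρ Q : Matrix n n ℂ) (δ : ℝ)
    (hρ : ρ.PosSemidef) (hρtr : ρ.trace.re ≤ 1)
    (hQ : Q.PosSemidef) (hQI : ((1 : Matrix n n ℂ) - Q).PosSemidef)
    (h : 1 - δ ≤ ((Q * ρ).trace).re) :
    purDist ρ (msqrt Q * ρ * msqrt Q) ≤ Real.sqrt (2 * δ) := by
  have hmQ : msqrt Q = hQ.sqrt := by unfold msqrt; exact dif_pos hQ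
  have hmρ : msqrt ρ = hρ.sqrt := by unfold msqrt; exact dif_pos hρ
  have hsQ := hQ.posSemidef_sqrt
  have hsρ := hρ.posSemidef_sqrt
  have hσ : (hQ.sqrt * ρ * hQ.sqrt).PosSemidef := by
    have := hρ.mul_mul_conjTranspose_same hQ.sqrt
    rwa [hsQ.1] at this
  have hmσ : msqrt (hQ.sqrt * ρ * hQ.sqrt) = hσ.sqrt := by unfold msqrt; exact dif_pos hσ
  set A : Matrix n n ℂ := hρ.sqrt * hσ.sqrt with hAdef
  have hτ : (hρ.sqrt * hQ.sqrt * hρ.sqrt).PosSemidef := by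
    have := hsQ.mul_mul_conjTranspose_same hρ.sqrt
    rwa [hsρ.1] at this
  have hτsq : (hρ.sqrt * hQ.sqrt * hρ.sqrt) ^ 2 = A * Aᴴ := by
    have hAH : Aᴴ = hσ.sqrt * hρ.sqrt := by
      rw [hAdef, Matrix.conjTranspose_mul, hσ.posSemidef_sqrt.1, hsρ.1]
    rw [hAH, hAdef]
    calc (hρ.sqrt * hQ.sqrt * hρ.sqrt) ^ 2
        = hρ.sqrt * (hQ.sqrt * (hρ.sqrt * hρ.sqrt) * hQ.sqrt) * hρ.sqrt := by
          rw [pow_two]; noncomm_ring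
      _ = hρ.sqrt * (hQ.sqrt * ρ * hQ.sqrt) * hρ.sqrt := by rw [hρ.sqrt_mul_self]
      _ = hρ.sqrt * (hσ.sqrt * hσ.sqrt) * hρ.sqrt := by rw [hσ.sqrt_mul_self]
      _ = (hρ.sqrt * hσ.sqrt) * (hσ.sqrt * hρ.sqrt) := by noncomm_ring
  have hsqrtAA : (Matrix.posSemidef_self_mul_conjTranspose A).sqrt
      = hρ.sqrt * hQ.sqrt * hρ.sqrt :=
    (hτ.eq_sqrt_of_sq_eq _ hτsq).symm
  have htrτ : (hρ.sqrt * hQ.sqrt * hρ.sqrt).trace = (hQ.sqrt * ρ).trace := by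
    rw [Matrix.trace_mul_cycle, hρ.sqrt_mul_self, Matrix.trace_mul_comm]
  have hTN : traceNorm (msqrt ρ * msqrt (hQ.sqrt * ρ * hQ.sqrt))
      = ((hQ.sqrt * ρ).trace).re := by
    rw [hmρ, hmσ]
    unfold traceNorm
    rw [trace_sqrt_conj, hsqrtAA, htrτ]
  have hge : ((Q * ρ).trace).re ≤ ((hQ.sqrt * ρ).trace).re := by
    have hD := sqrt_sub_psd hQ hQI
    have h0 := psd_trace_mul_nonneg hD hρ
    have hsplit : (hQ.sqrt * ρ).trace = (Q * ρ).trace + ((hQ.sqrt - Q) * ρ).trace := by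
      rw [show hQ.sqrt * ρ = Q * ρ + (hQ.sqrt - Q) * ρ by noncomm_ring, Matrix.trace_add]
    rw [hsplit, Complex.add_re]
    have h1 := (Complex.le_def.mp h0).1
    simp only [Complex.zero_re] at h1
    linarith
  have hF : 1 - δ ≤ genFid ρ (msqrt Q * ρ * msqrt Q) := by
    rw [hmQ]
    unfold genFid
    rw [hTN]
    have := Real.sqrt_nonneg ((1 - ρ.trace.re) * (1 - (hQ.sqrt * ρ * hQ.sqrt).trace.re))
    linarith
  have hF0 : 0 ≤ genFid ρ (msqrt Q * ρ * msqrt Q) := by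
    unfold genFid
    have h1 : 0 ≤ traceNorm (msqrt ρ * msqrt (msqrt Q * ρ * msqrt Q)) := by
      unfold traceNorm
      exact psd_trace_re_nonneg (Matrix.posSemidef_conjTranspose_mul_self _).posSemidef_sqrt
    have h2 := Real.sqrt_nonneg ((1 - ρ.trace.re) * (1 - (msqrt Q * ρ * msqrt Q).trace.re))
    linarith
  unfold purDist
  apply Real.sqrt_le_sqrt
  nlinarith [hF, hF0, sq_nonneg (genFid ρ (msqrt Q * ρ * msqrt Q)),
    sq_nonneg (genFid ρ (msqrt Q * ρ * msqrt Q) + 1 - δ), sq_nonneg δ]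
end
end

section
/- If {Q^j} is a finite collection of positive semidefinite operators on a space X with ∑ⱼ Q^j ≤ I, and {U^j} is a collection of unitaries on a space Y, then the operator W = ∑ⱼ Q^j ⊗ U^j on X ⊗ Y satisfies W† W ≤ I. -/
open Matrix Kronecker
open scoped ComplexOrder
open scoped MatrixOrder

noncomputable section

/-- Conjugate transpose of a Kronecker product. -/
lemma kron_conjTranspose {l m n p : Type*} (A : Matrix l m ℂ) (B : Matrix n p ℂ) :
    (A ⊗ₖ B)ᴴ = Aᴴ ⊗ₖ Bᴴ := by
  ext ⟨i₁, i₂⟩ ⟨j₁, j₂⟩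
  simp [Matrix.conjTranspose_apply, Matrix.kroneckerMap_apply, mul_comm]

/-- Kronecker product of positive semidefinite matrices is positive semidefinite. -/
lemma kron_posSemidef {m n : Type*} [Fintype m] [Fintype n] [DecidableEq m] [DecidableEq n]
    {A : Matrix m m ℂ} {B : Matrix n n ℂ} (hA : A.PosSemidef) (hB : B.PosSemidef) :
    (A ⊗ₖ B).PosSemidef := by
  have h : A ⊗ₖ B = (CFC.sqrt A ⊗ₖ CFC.sqrt B)ᴴ * (CFC.sqrt A ⊗ₖ CFC.sqrt B) := by
    rw [kron_conjTranspose, ← Matrix.mul_kronecker_mul,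
      (Matrix.nonneg_iff_posSemidef.mp (CFC.sqrt_nonneg A)).isHermitian.eq,
      (Matrix.nonneg_iff_posSemidef.mp (CFC.sqrt_nonneg B)).isHermitian.eq,
      CFC.sqrt_mul_sqrt_self A (Matrix.nonneg_iff_posSemidef.mpr hA),
      CFC.sqrt_mul_sqrt_self B (Matrix.nonneg_iff_posSemidef.mpr hB)]
  rw [h]
  exact Matrix.posSemidef_conjTranspose_mul_self _

/-- If `AᴴA ≤ 1` then `AAᴴ ≤ 1`. -/
lemma contraction_flip {m n : Type*} [Fintype m] [Fintype n] [DecidableEq m] [DecidableEq n]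
    (A : Matrix m n ℂ) (h : ((1 : Matrix n n ℂ) - Aᴴ * A).PosSemidef) :
    ((1 : Matrix m m ℂ) - A * Aᴴ).PosSemidef := by
  set B := A * Aᴴ with hBdef
  have hB : B.PosSemidef := Matrix.posSemidef_self_mul_conjTranspose A
  have h1 : (A * ((1 : Matrix n n ℂ) - Aᴴ * A) * Aᴴ).PosSemidef :=
    h.mul_mul_conjTranspose_same A
  have h1' : (B - B * B).PosSemidef := by
    have e : A * ((1 : Matrix n n ℂ) - Aᴴ * A) * Aᴴ = B - B * B := by
      rw [hBdef]
      simp only [Matrix.mul_sub, Matrix.sub_mul, Matrix.mul_one, Matrix.mul_assoc]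
    rwa [e] at h1
  have h2 : (((1 : Matrix m m ℂ) - B) * ((1 : Matrix m m ℂ) - B)).PosSemidef := by
    have hH : ((1 : Matrix m m ℂ) - B)ᴴ = (1 : Matrix m m ℂ) - B := by
      rw [Matrix.conjTranspose_sub, Matrix.conjTranspose_one, hB.isHermitian.eq]
    have := Matrix.posSemidef_conjTranspose_mul_self ((1 : Matrix m m ℂ) - B)
    rwa [hH] at this
  have e : (1 : Matrix m m ℂ) - B
      = ((1 : Matrix m m ℂ) - B) * ((1 : Matrix m m ℂ) - B) + (B - B * B) := by
    noncomm_ring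
  rw [e]
  exact h2.add h1'

/-- **Controlled-unitary using a POVM.** If `{Q^j}` are positive semidefinite with
`∑ⱼ Q^j ≤ I` and `{U^j}` are unitaries, then `W = ∑ⱼ Q^j ⊗ U^j` satisfies `W†W ≤ I`. -/
theorem povm_controlled_contraction {X Y J : Type*}
    [Fintype X] [DecidableEq X] [Fintype Y] [DecidableEq Y] [Fintype J]
    (Q : J → Matrix X X ℂ) (U : J → Matrix Y Y ℂ)
    (hQ : ∀ j, (Q j).PosSemidef)
    (hsum : ((1 : Matrix X X ℂ) - ∑ j, Q j).PosSemidef)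
    (hU : ∀ j, U j ∈ Matrix.unitaryGroup Y ℂ) :
    ((1 : Matrix (X × Y) (X × Y) ℂ) -
      (∑ j, Q j ⊗ₖ U j)ᴴ * (∑ j, Q j ⊗ₖ U j)).PosSemidef := by
  classical
  set S : J → Matrix X X ℂ := fun j => CFC.sqrt (Q j) with hSdef
  have hSH : ∀ j, (S j)ᴴ = S j := fun j =>
    (Matrix.nonneg_iff_posSemidef.mp (CFC.sqrt_nonneg (Q j))).isHermitian.eq
  have hSS : ∀ j, S j * S j = Q j := fun j =>
    CFC.sqrt_mul_sqrt_self (Q j) (Matrix.nonneg_iff_posSemidef.mpr (hQ j))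
  have hUU : ∀ j, (U j)ᴴ * U j = 1 := by
    intro j
    have := Unitary.star_mul_self_of_mem (hU j)
    rwa [Matrix.star_eq_conjTranspose] at this
  set M : J → Matrix (X × Y) (X × Y) ℂ := fun j => S j ⊗ₖ U j with hMdef
  set N : J → Matrix (X × Y) (X × Y) ℂ := fun j => S j ⊗ₖ (1 : Matrix Y Y ℂ) with hNdef
  -- key per-index products
  have hNM : ∀ j, (N j)ᴴ * M j = Q j ⊗ₖ U j := by
    intro j
    rw [hNdef, hMdef]
    simp only [kron_conjTranspose, Matrix.conjTranspose_one, ← Matrix.mul_kronecker_mul,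
      hSH, hSS, Matrix.one_mul]
  have hNN : ∀ j, (N j)ᴴ * N j = Q j ⊗ₖ (1 : Matrix Y Y ℂ) := by
    intro j
    rw [hNdef]
    simp only [kron_conjTranspose, Matrix.conjTranspose_one, ← Matrix.mul_kronecker_mul,
      hSH, hSS, Matrix.one_mul]
  have hMM : ∀ j, (M j)ᴴ * M j = Q j ⊗ₖ (1 : Matrix Y Y ℂ) := by
    intro j
    rw [hMdef]
    simp only [kron_conjTranspose, ← Matrix.mul_kronecker_mul, hSH, hSS, hUU]
  -- big block matrices
  set V : Matrix (J × (X × Y)) (X × Y) ℂ := Matrix.of fun jp q => M jp.1 jp.2 q with hVdef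
  set T : Matrix (J × (X × Y)) (X × Y) ℂ := Matrix.of fun jp q => N jp.1 jp.2 q with hTdef
  have hTV : Tᴴ * V = ∑ j, Q j ⊗ₖ U j := by
    ext p q
    rw [Matrix.mul_apply, Fintype.sum_prod_type, Matrix.sum_apply]
    refine Finset.sum_congr rfl fun j _ => ?_
    rw [← hNM j, Matrix.mul_apply]
    simp [hTdef, hVdef, Matrix.conjTranspose_apply]
  have hTT : Tᴴ * T = ∑ j, Q j ⊗ₖ (1 : Matrix Y Y ℂ) := by
    ext p q
    rw [Matrix.mul_apply, Fintype.sum_prod_type, Matrix.sum_apply]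
    refine Finset.sum_congr rfl fun j _ => ?_
    rw [← hNN j, Matrix.mul_apply]
    simp [hTdef, Matrix.conjTranspose_apply]
  have hVV : Vᴴ * V = ∑ j, Q j ⊗ₖ (1 : Matrix Y Y ℂ) := by
    ext p q
    rw [Matrix.mul_apply, Fintype.sum_prod_type, Matrix.sum_apply]
    refine Finset.sum_congr rfl fun j _ => ?_
    rw [← hMM j, Matrix.mul_apply]
    simp [hVdef, Matrix.conjTranspose_apply]
  -- 1 - ∑ Qⱼ ⊗ 1 is PSD
  have hkey : ((1 : Matrix (X × Y) (X × Y) ℂ)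
      - ∑ j, Q j ⊗ₖ (1 : Matrix Y Y ℂ)).PosSemidef := by
    have e : (1 : Matrix (X × Y) (X × Y) ℂ) - ∑ j, Q j ⊗ₖ (1 : Matrix Y Y ℂ)
        = ((1 : Matrix X X ℂ) - ∑ j, Q j) ⊗ₖ (1 : Matrix Y Y ℂ) := by
      ext ⟨a, b⟩ ⟨c, d⟩
      by_cases hbd : b = d <;>
        simp [Matrix.sub_apply, Matrix.sum_apply, Matrix.one_apply, Prod.ext_iff, hbd,
          Finset.sum_mul, sub_mul]
    rw [e]
    exact kron_posSemidef hsum Matrix.PosSemidef.one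
  -- TᴴT ≤ 1, hence TTᴴ ≤ 1
  have hT1 : ((1 : Matrix (X × Y) (X × Y) ℂ) - Tᴴ * T).PosSemidef := by rw [hTT]; exact hkey
  have hTflip : ((1 : Matrix (J × (X × Y)) (J × (X × Y)) ℂ) - T * Tᴴ).PosSemidef :=
    contraction_flip T hT1
  -- assemble
  have hW : (∑ j, Q j ⊗ₖ U j) = Tᴴ * V := hTV.symm
  rw [hW]
  have e : (1 : Matrix (X × Y) (X × Y) ℂ) - (Tᴴ * V)ᴴ * (Tᴴ * V)
      = ((1 : Matrix (X × Y) (X × Y) ℂ) - Vᴴ * V)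
        + Vᴴ * ((1 : Matrix (J × (X × Y)) (J × (X × Y)) ℂ) - T * Tᴴ) * V := by
    rw [Matrix.conjTranspose_mul, Matrix.conjTranspose_conjTranspose]
    simp only [Matrix.mul_sub, Matrix.sub_mul, Matrix.mul_one, Matrix.one_mul, Matrix.mul_assoc]
    abel
  rw [e]
  have h1 : ((1 : Matrix (X × Y) (X × Y) ℂ) - Vᴴ * V).PosSemidef := by rw [hVV]; exact hkey
  have h2 := hTflip.conjTranspose_mul_mul_same V
  exact h1.add h2
end
end

section
/- If F = W†W for an operator W with W†W ≤ I and [W,H] = 0 for a Hermitian H, then F commutes with H, the spectral projector P of F onto eigenvalues ≥ ν (for 0 < ν < 1) commutes with H, and V = W F^{-1/2} P is a partial isometry (V†V = P) commuting with H. -/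
open Matrix
open scoped ComplexOrder Classical

noncomputable section

variable {n : Type*} [Fintype n] [DecidableEq n]

lemma my_cancel_left {U B : Matrix n n ℂ} (hUU' : U * Uᴴ = 1) :
    ∀ X : Matrix n n ℂ, U * (Uᴴ * X) = X := by
  intro X; rw [← Matrix.mul_assoc, hUU', Matrix.one_mul]

lemma my_funCalc_comm {A B : Matrix n n ℂ} (hA : A.IsHermitian) (g : ℝ → ℂ)
    (hc : A * B = B * A) :
    ((hA.eigenvectorUnitary : Matrix n n ℂ) *
        Matrix.diagonal (fun i => g (hA.eigenvalues i)) *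
        (hA.eigenvectorUnitary : Matrix n n ℂ)ᴴ) * B
      = B * ((hA.eigenvectorUnitary : Matrix n n ℂ) *
        Matrix.diagonal (fun i => g (hA.eigenvalues i)) *
        (hA.eigenvectorUnitary : Matrix n n ℂ)ᴴ) := by
  set U : Matrix n n ℂ := (hA.eigenvectorUnitary : Matrix n n ℂ) with hU
  have hUU : Uᴴ * U = 1 := by
    simpa [Matrix.star_eq_conjTranspose] using
      Unitary.coe_star_mul_self hA.eigenvectorUnitary
  have hUU' : U * Uᴴ = 1 := by
    simpa [Matrix.star_eq_conjTranspose] using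
      Unitary.coe_mul_star_self hA.eigenvectorUnitary
  set D : Matrix n n ℂ := Matrix.diagonal (RCLike.ofReal ∘ hA.eigenvalues) with hD
  set K : Matrix n n ℂ := Uᴴ * B * U with hK
  have hspec : A = U * D * Uᴴ := by
    exact hA.spectral_theorem
  have hDK : D * K = K * D := by
    calc D * K = (Uᴴ * U) * D * (Uᴴ * B * U) := by rw [hUU, Matrix.one_mul]
      _ = Uᴴ * ((U * D * Uᴴ) * B) * U := by simp only [Matrix.mul_assoc]
      _ = Uᴴ * (B * (U * D * Uᴴ)) * U := by rw [← hspec, hc]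
      _ = (Uᴴ * B * U) * D * (Uᴴ * U) := by simp only [Matrix.mul_assoc]
      _ = K * D := by rw [hUU, Matrix.mul_one, hK]
  set Dg : Matrix n n ℂ := Matrix.diagonal (fun i => g (hA.eigenvalues i)) with hDg
  have hgK : Dg * K = K * Dg := by
    ext i j
    have h2 : (D * K) i j = (K * D) i j := by rw [hDK]
    simp only [hD, Matrix.diagonal_mul, Matrix.mul_diagonal, Function.comp] at h2
    simp only [hDg, Matrix.diagonal_mul, Matrix.mul_diagonal]
    by_cases he : hA.eigenvalues i = hA.eigenvalues j
    · rw [he, mul_comm]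
    · have hK0 : K i j = 0 := by
        have hsub := sub_eq_zero.mpr h2
        rw [mul_comm (K i j), ← sub_mul] at hsub
        rcases mul_eq_zero.mp hsub with h | h
        · exact absurd (sub_eq_zero.mp h) (by exact_mod_cast he)
        · exact h
      simp [hK0]
  calc U * Dg * Uᴴ * B
      = U * Dg * Uᴴ * B * (U * Uᴴ) := by rw [hUU', Matrix.mul_one]
    _ = U * (Dg * (Uᴴ * B * U)) * Uᴴ := by simp only [Matrix.mul_assoc]
    _ = U * ((Uᴴ * B * U) * Dg) * Uᴴ := by rw [← hK, hgK]
    _ = (U * Uᴴ) * B * (U * Dg * Uᴴ) := by simp only [Matrix.mul_assoc]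
    _ = B * (U * Dg * Uᴴ) := by rw [hUU', Matrix.one_mul]

/-- Spectral projector of a Hermitian matrix onto the eigenspaces with eigenvalue `≥ ν`. -/
def specProj {A : Matrix n n ℂ} (hA : A.IsHermitian) (ν : ℝ) : Matrix n n ℂ :=
  (hA.eigenvectorUnitary : Matrix n n ℂ) *
    Matrix.diagonal (fun i => if ν ≤ hA.eigenvalues i then (1 : ℂ) else 0) *
    (hA.eigenvectorUnitary : Matrix n n ℂ)ᴴ

/-- Moore–Penrose pseudo-inverse square root of a Hermitian matrix
(eigenvalue `λ ↦ (√λ)⁻¹`, with `0⁻¹ = 0`); zero if the matrix is not Hermitian. -/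
def pinvSqrt (A : Matrix n n ℂ) : Matrix n n ℂ :=
  if h : A.IsHermitian then
    (h.eigenvectorUnitary : Matrix n n ℂ) *
      Matrix.diagonal (fun i => (((Real.sqrt (h.eigenvalues i))⁻¹ : ℝ) : ℂ)) *
      (h.eigenvectorUnitary : Matrix n n ℂ)ᴴ
  else 0

set_option maxHeartbeats 1000000 in
/-- **Partial isometry construction.** If `F = W†W` with `W†W ≤ I` and `[W,H] = 0` for a
Hermitian `H`, then `F` commutes with `H`, the spectral projector `P` of `F` onto eigenvalues
`≥ ν` (for `0 < ν < 1`) commutes with `H`, and `V = W F^{-1/2} P` is a partial isometry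
(`V†V = P`) commuting with `H`. -/
theorem partial_isometry_construction (W H : Matrix n n ℂ) (ν : ℝ)
    (hν0 : 0 < ν) (hν1 : ν < 1) (hH : H.IsHermitian)
    (hW : ((1 : Matrix n n ℂ) - Wᴴ * W).PosSemidef)
    (hcomm : W * H = H * W) :
    (Wᴴ * W) * H = H * (Wᴴ * W) ∧
    specProj (Matrix.isHermitian_conjTranspose_mul_self W) ν * H
      = H * specProj (Matrix.isHermitian_conjTranspose_mul_self W) ν ∧
    (W * pinvSqrt (Wᴴ * W) * specProj (Matrix.isHermitian_conjTranspose_mul_self W) ν)ᴴ *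
        (W * pinvSqrt (Wᴴ * W) * specProj (Matrix.isHermitian_conjTranspose_mul_self W) ν)
      = specProj (Matrix.isHermitian_conjTranspose_mul_self W) ν ∧
    (W * pinvSqrt (Wᴴ * W) * specProj (Matrix.isHermitian_conjTranspose_mul_self W) ν) * H
      = H * (W * pinvSqrt (Wᴴ * W) * specProj (Matrix.isHermitian_conjTranspose_mul_self W) ν) := by
  have hF : (Wᴴ * W).IsHermitian := Matrix.isHermitian_conjTranspose_mul_self W
  set U : Matrix n n ℂ := (hF.eigenvectorUnitary : Matrix n n ℂ) with hU
  have hUU : Uᴴ * U = 1 := by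
    simpa [Matrix.star_eq_conjTranspose] using
      Unitary.coe_star_mul_self hF.eigenvectorUnitary
  have hUU' : U * Uᴴ = 1 := by
    simpa [Matrix.star_eq_conjTranspose] using
      Unitary.coe_mul_star_self hF.eigenvectorUnitary
  -- commuting of H with Wᴴ too
  have hcomm' : Wᴴ * H = H * Wᴴ := by
    have := congrArg Matrix.conjTranspose hcomm
    simp only [Matrix.conjTranspose_mul, hH.eq] at this
    exact this.symm
  have h1 : (Wᴴ * W) * H = H * (Wᴴ * W) := by
    calc Wᴴ * W * H = Wᴴ * (W * H) := by rw [Matrix.mul_assoc]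
      _ = Wᴴ * (H * W) := by rw [hcomm]
      _ = (Wᴴ * H) * W := by rw [Matrix.mul_assoc]
      _ = H * (Wᴴ * W) := by rw [hcomm', Matrix.mul_assoc]
  -- specProj and pinvSqrt as matrix functions
  have hPdef : specProj hF ν
      = U * Matrix.diagonal (fun i => (fun t : ℝ => if ν ≤ t then (1:ℂ) else 0)
          (hF.eigenvalues i)) * Uᴴ := rfl
  have hGdef : pinvSqrt (Wᴴ * W)
      = U * Matrix.diagonal (fun i => (fun t : ℝ => (((Real.sqrt t)⁻¹ : ℝ) : ℂ))
          (hF.eigenvalues i)) * Uᴴ := dif_pos hF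
  have h2 : specProj hF ν * H = H * specProj hF ν := by
    rw [hPdef]; exact my_funCalc_comm hF (fun t : ℝ => if ν ≤ t then (1:ℂ) else 0) h1
  have hGcomm : pinvSqrt (Wᴴ * W) * H = H * pinvSqrt (Wᴴ * W) := by
    rw [hGdef]; exact my_funCalc_comm hF (fun t : ℝ => (((Real.sqrt t)⁻¹ : ℝ) : ℂ)) h1
  -- Hermitian-ness of P and G
  have hcol : ∀ d e : n → ℂ,
      (U * Matrix.diagonal d * Uᴴ) * (U * Matrix.diagonal e * Uᴴ)
        = U * Matrix.diagonal (fun i => d i * e i) * Uᴴ := by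
    intro d e
    calc (U * Matrix.diagonal d * Uᴴ) * (U * Matrix.diagonal e * Uᴴ)
        = U * (Matrix.diagonal d * ((Uᴴ * U) * (Matrix.diagonal e * Uᴴ))) := by
          simp only [Matrix.mul_assoc]
      _ = U * (Matrix.diagonal d * Matrix.diagonal e) * Uᴴ := by
          rw [hUU, Matrix.one_mul]; simp only [Matrix.mul_assoc]
      _ = U * Matrix.diagonal (fun i => d i * e i) * Uᴴ := by
          rw [Matrix.diagonal_mul_diagonal]
  have hherm : ∀ d : ℝ → ℂ, (∀ t, star (d t) = d t) →
      (U * Matrix.diagonal (fun i => d (hF.eigenvalues i)) * Uᴴ)ᴴ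
        = U * Matrix.diagonal (fun i => d (hF.eigenvalues i)) * Uᴴ := by
    intro d hd
    have hds : (star fun i => d (hF.eigenvalues i)) = fun i => d (hF.eigenvalues i) :=
      funext fun i => hd _
    rw [Matrix.conjTranspose_mul, Matrix.conjTranspose_mul, Matrix.conjTranspose_conjTranspose,
      Matrix.diagonal_conjTranspose, hds, Matrix.mul_assoc]
  have hspec : Wᴴ * W = U * Matrix.diagonal (fun i =>
      (fun t : ℝ => (t : ℂ)) (hF.eigenvalues i)) * Uᴴ := by
    exact hF.spectral_theorem
  have hPh : (specProj hF ν)ᴴ = specProj hF ν := by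
    rw [hPdef]
    exact hherm (fun t : ℝ => if ν ≤ t then (1:ℂ) else 0)
      (fun t => by by_cases h : ν ≤ t <;> simp [h])
  have hGh : (pinvSqrt (Wᴴ * W))ᴴ = pinvSqrt (Wᴴ * W) := by
    rw [hGdef]
    exact hherm (fun t : ℝ => (((Real.sqrt t)⁻¹ : ℝ) : ℂ)) (fun t => by simp)
  have heig : ∀ i, 0 ≤ hF.eigenvalues i := fun i =>
    Matrix.eigenvalues_conjTranspose_mul_self_nonneg W i
  -- the partial isometry property
  have hcolF : ∀ e : n → ℂ, (Wᴴ * W) * (U * Matrix.diagonal e * Uᴴ)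
      = U * Matrix.diagonal (fun i => (hF.eigenvalues i : ℂ) * e i) * Uᴴ := by
    intro e
    conv_lhs => rw [hspec]
    exact hcol _ e
  have h3 : (W * pinvSqrt (Wᴴ * W) * specProj hF ν)ᴴ *
      (W * pinvSqrt (Wᴴ * W) * specProj hF ν) = specProj hF ν := by
    have e1 : (W * pinvSqrt (Wᴴ * W) * specProj hF ν)ᴴ *
        (W * pinvSqrt (Wᴴ * W) * specProj hF ν)
        = specProj hF ν * (pinvSqrt (Wᴴ * W) * ((Wᴴ * W) *
            (pinvSqrt (Wᴴ * W) * specProj hF ν))) := by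
      simp only [Matrix.conjTranspose_mul, hPh, hGh, Matrix.mul_assoc]
    rw [e1, hGdef, hPdef, hcol, hcolF, hcol, hcol]
    congr 2
    ext i j
    rcases eq_or_ne i j with rfl | hij
    swap
    · simp [Matrix.diagonal_apply_ne _ hij]
    simp only [Matrix.diagonal_apply_eq]
    by_cases h : ν ≤ hF.eigenvalues i
    · have hpos : 0 < hF.eigenvalues i := lt_of_lt_of_le hν0 h
      have hreal : ((Real.sqrt (hF.eigenvalues i))⁻¹ : ℝ) * (hF.eigenvalues i *
          (Real.sqrt (hF.eigenvalues i))⁻¹) = 1 := by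
        have hs : Real.sqrt (hF.eigenvalues i) ≠ 0 :=
          ne_of_gt (Real.sqrt_pos.mpr hpos)
        rw [← Real.mul_self_sqrt (le_of_lt hpos)]
        field_simp
        rw [Real.sqrt_sq (Real.sqrt_nonneg _)]
      rw [if_pos h]
      simp only [one_mul, mul_one]
      exact_mod_cast hreal
    · rw [if_neg h]
      simp
  have h4 : (W * pinvSqrt (Wᴴ * W) * specProj hF ν) * H
      = H * (W * pinvSqrt (Wᴴ * W) * specProj hF ν) := by
    calc W * pinvSqrt (Wᴴ * W) * specProj hF ν * H
        = W * (pinvSqrt (Wᴴ * W) * (specProj hF ν * H)) := by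
          simp only [Matrix.mul_assoc]
      _ = W * (pinvSqrt (Wᴴ * W) * (H * specProj hF ν)) := by rw [h2]
      _ = W * ((pinvSqrt (Wᴴ * W) * H) * specProj hF ν) := by
          simp only [Matrix.mul_assoc]
      _ = W * ((H * pinvSqrt (Wᴴ * W)) * specProj hF ν) := by rw [hGcomm]
      _ = (W * H) * (pinvSqrt (Wᴴ * W) * specProj hF ν) := by
          simp only [Matrix.mul_assoc]
      _ = (H * W) * (pinvSqrt (Wᴴ * W) * specProj hF ν) := by rw [hcomm]
      _ = H * (W * pinvSqrt (Wᴴ * W) * specProj hF ν) := by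
          simp only [Matrix.mul_assoc]
  exact ⟨h1, h2, h3, h4⟩
end
end

section
/- Equivalence of implementability with battery and Gibbs-sub-preservation (easy direction): let Γ_X, Γ_{X'} ≥ 0, let 𝓣 : X → X' be a completely positive trace non-increasing map, and w ∈ ℝ. If there exist integers d ≥ e^{m}, a rank-e^m projector P on a battery space W of dimension d with Γ_W = I_W, battery states τ = P/e^m and τ' = P'/e^{m'} with (ln d − m) − (ln d − m') ≤ w, and a completely positive trace-preserving map Φ on X ⊗ W with Φ(Γ_X ⊗ I_W) ≤ Γ_{X'} ⊗ I_W such that 𝓣(ρ) = tr_W[P' Φ(ρ ⊗ τ)] for all ρ, then 𝓣(Γ_X) ≤ e^{w} Γ_{X'}. -/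
open Matrix Kronecker
open scoped ComplexOrder Classical

noncomputable section

/-- Complete positivity of a (linear) map between matrix algebras, via positivity of
its Choi matrix. -/
def IsCPfun {n m : Type*} [Fintype n] [DecidableEq n] [Fintype m] [DecidableEq m]
    (E : Matrix n n ℂ → Matrix m m ℂ) : Prop :=
  (Matrix.of fun (p q : m × n) =>
    E (Matrix.single p.2 q.2 (1 : ℂ)) p.1 q.1).PosSemidef

/-- Partial trace over the second tensor factor. -/
def ptr2 {A B : Type*} [Fintype A] [Fintype B]
    (M : Matrix (A × B) (A × B) ℂ) : Matrix A A ℂ :=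
  Matrix.of fun a b => ∑ w, M (a, w) (b, w)

/-! ### Auxiliary lemmas -/

lemma kron_conjT {A B : Type*} [Fintype A] [Fintype B] (M : Matrix A A ℂ) (N : Matrix B B ℂ) :
    (M ⊗ₖ N)ᴴ = Mᴴ ⊗ₖ Nᴴ := by
  ext ⟨a, b⟩ ⟨c, d⟩
  simp [Matrix.conjTranspose_apply, Matrix.kroneckerMap_apply, star_mul']

lemma Matrix.posSemidef_iff_eq_transpose_mul_self {n : Type*} [Fintype n] {A : Matrix n n ℂ} :
    A.PosSemidef ↔ ∃ B : Matrix n n ℂ, A = Bᴴ * B := by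
  classical
  constructor
  · intro h
    open MatrixOrder in
    obtain ⟨B, hB⟩ := CStarAlgebra.nonneg_iff_eq_star_mul_self.mp h.nonneg
    exact ⟨B, hB⟩
  · rintro ⟨B, rfl⟩
    exact Matrix.posSemidef_conjTranspose_mul_self B

lemma kron_psd {A B : Type*} [Fintype A] [Fintype B] {M : Matrix A A ℂ} {N : Matrix B B ℂ}
    (hM : M.PosSemidef) (hN : N.PosSemidef) : (M ⊗ₖ N).PosSemidef := by
  obtain ⟨C, rfl⟩ := Matrix.posSemidef_iff_eq_transpose_mul_self.mp hM
  obtain ⟨D, rfl⟩ := Matrix.posSemidef_iff_eq_transpose_mul_self.mp hN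
  rw [Matrix.mul_kronecker_mul, ← kron_conjT]
  exact Matrix.posSemidef_conjTranspose_mul_self _

lemma sum_rev4 {α β γ δ M : Type*} [Fintype α] [Fintype β] [Fintype γ] [Fintype δ]
    [AddCommMonoid M] (f : α → β → γ → δ → M) :
    ∑ i, ∑ j, ∑ k, ∑ l, f i j k l = ∑ l, ∑ k, ∑ j, ∑ i, f i j k l := by
  calc ∑ i, ∑ j, ∑ k, ∑ l, f i j k l
      = ∑ j, ∑ i, ∑ k, ∑ l, f i j k l := Finset.sum_comm
    _ = ∑ j, ∑ k, ∑ i, ∑ l, f i j k l :=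
        Finset.sum_congr rfl fun _ _ => Finset.sum_comm
    _ = ∑ j, ∑ k, ∑ l, ∑ i, f i j k l :=
        Finset.sum_congr rfl fun _ _ => Finset.sum_congr rfl fun _ _ => Finset.sum_comm
    _ = ∑ k, ∑ j, ∑ l, ∑ i, f i j k l := Finset.sum_comm
    _ = ∑ k, ∑ l, ∑ j, ∑ i, f i j k l :=
        Finset.sum_congr rfl fun _ _ => Finset.sum_comm
    _ = ∑ l, ∑ k, ∑ j, ∑ i, f i j k l := Finset.sum_comm

/-- A completely positive map sends positive semidefinite matrices to positive
semidefinite matrices. -/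
lemma cp_map_psd {n m : Type*} [Fintype n] [DecidableEq n] [Fintype m] [DecidableEq m]
    (E : Matrix n n ℂ →ₗ[ℂ] Matrix m m ℂ) (hE : IsCPfun fun M => E M)
    {ρ : Matrix n n ℂ} (hρ : ρ.PosSemidef) : (E ρ).PosSemidef := by
  obtain ⟨A, hA⟩ := Matrix.posSemidef_iff_eq_transpose_mul_self.mp hE
  obtain ⟨B, rfl⟩ := Matrix.posSemidef_iff_eq_transpose_mul_self.mp hρ
  have hC : ∀ (i j : n) (p q : m),
      E (Matrix.single i j 1) p q = (Aᴴ * A) (p, i) (q, j) := by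
    intro i j p q
    have := congrFun (congrFun hA (p, i)) (q, j)
    simpa using this
  have hEapp : ∀ (σ : Matrix n n ℂ) (p q : m),
      E σ p q = ∑ i, ∑ j, σ i j * E (Matrix.single i j 1) p q := by
    intro σ p q
    conv_lhs => rw [Matrix.matrix_eq_sum_single σ]
    rw [map_sum, Matrix.sum_apply]
    refine Finset.sum_congr rfl fun i _ => ?_
    rw [map_sum, Matrix.sum_apply]
    refine Finset.sum_congr rfl fun j _ => ?_
    have : Matrix.single i j (σ i j) = σ i j • Matrix.single i j 1 := by
      rw [Matrix.smul_single, smul_eq_mul, mul_one]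
    rw [this, _root_.map_smul, Matrix.smul_apply, smul_eq_mul]
  set F : Matrix (n × (m × n)) m ℂ :=
    Matrix.of fun lk a => ∑ i, A lk.2 (a, i) * B lk.1 i with hF
  have key : E (Bᴴ * B) = Fᴴ * F := by
    ext p q
    rw [hEapp]
    simp only [Matrix.mul_apply, Matrix.conjTranspose_apply, hC, hF, Matrix.of_apply,
      star_sum, star_mul', Finset.sum_mul, Finset.mul_sum]
    rw [Fintype.sum_prod_type]
    rw [sum_rev4 (f := fun i j k l =>
      star (B l i) * B l j * (star (A k (p, i)) * A k (q, j)))]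
    refine Finset.sum_congr rfl fun l _ => Finset.sum_congr rfl fun k _ =>
      Finset.sum_congr rfl fun j _ => Finset.sum_congr rfl fun i _ => by ring
  rw [key]
  exact Matrix.posSemidef_conjTranspose_mul_self _

lemma ptr2_psd {A B : Type*} [Fintype A] [Fintype B] {M : Matrix (A × B) (A × B) ℂ}
    (h : M.PosSemidef) : (ptr2 M).PosSemidef := by
  obtain ⟨C, rfl⟩ := Matrix.posSemidef_iff_eq_transpose_mul_self.mp h
  have key : ptr2 (Cᴴ * C) =
      (Matrix.of fun (kw : (A × B) × B) a => C kw.1 (a, kw.2))ᴴ *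
      (Matrix.of fun (kw : (A × B) × B) a => C kw.1 (a, kw.2)) := by
    ext a b
    simp only [ptr2, Matrix.of_apply, Matrix.mul_apply, Matrix.conjTranspose_apply]
    rw [Fintype.sum_prod_type]
    exact Finset.sum_comm
  rw [key]
  exact Matrix.posSemidef_conjTranspose_mul_self _

lemma ptr2_sub {A B : Type*} [Fintype A] [Fintype B] (M N : Matrix (A × B) (A × B) ℂ) :
    ptr2 (M - N) = ptr2 M - ptr2 N := by
  ext a b
  simp [ptr2, Finset.sum_sub_distrib]

lemma ptr2_smul {A B : Type*} [Fintype A] [Fintype B] (c : ℂ) (M : Matrix (A × B) (A × B) ℂ) :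
    ptr2 (c • M) = c • ptr2 M := by
  ext a b
  simp [ptr2, Finset.mul_sum]

lemma ptr2_kron {A B : Type*} [Fintype A] [Fintype B] (M : Matrix A A ℂ) (N : Matrix B B ℂ) :
    ptr2 (M ⊗ₖ N) = N.trace • M := by
  ext a b
  simp only [ptr2, Matrix.of_apply, Matrix.kroneckerMap_apply, Matrix.smul_apply,
    Matrix.trace, Matrix.diag, smul_eq_mul, Finset.sum_mul]
  exact Finset.sum_congr rfl fun x _ => mul_comm _ _

lemma ptr2_proj {A' B : Type*} [Fintype A'] [DecidableEq A'] [Fintype B]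
    {Q : Matrix B B ℂ} (hQ : Q * Q = Q) (M : Matrix (A' × B) (A' × B) ℂ) :
    ptr2 (((1 : Matrix A' A' ℂ) ⊗ₖ Q) * M) =
      ptr2 (((1 : Matrix A' A' ℂ) ⊗ₖ Q) * M * ((1 : Matrix A' A' ℂ) ⊗ₖ Q)) := by
  have hXM : ∀ (a b : A') (w u : B),
      ((((1 : Matrix A' A' ℂ) ⊗ₖ Q) * M)) (a, w) (b, u) = ∑ v, Q w v * M (a, v) (b, u) := by
    intro a b w u
    rw [Matrix.mul_apply, Fintype.sum_prod_type]
    rw [Finset.sum_eq_single a (fun c _ hc => by simp [Matrix.one_apply, Ne.symm hc]) (by simp)]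
    simp [Matrix.one_apply]
  ext a b
  have hL : (ptr2 (((1 : Matrix A' A' ℂ) ⊗ₖ Q) * M)) a b
      = ∑ w, ∑ v, Q w v * M (a, v) (b, w) := by
    simp only [ptr2, Matrix.of_apply, hXM]
  have step : ∀ w : B,
      (((1 : Matrix A' A' ℂ) ⊗ₖ Q) * M * ((1 : Matrix A' A' ℂ) ⊗ₖ Q)) (a, w) (b, w)
      = ∑ u, (∑ v, Q w v * M (a, v) (b, u)) * Q u w := by
    intro w
    rw [Matrix.mul_apply, Fintype.sum_prod_type]
    rw [Finset.sum_eq_single b (fun c _ hc => by simp [Matrix.one_apply, hc]) (by simp)]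
    simp only [hXM, Matrix.kroneckerMap_apply, Matrix.one_apply_eq, one_mul]
  have hR : (ptr2 (((1 : Matrix A' A' ℂ) ⊗ₖ Q) * M * ((1 : Matrix A' A' ℂ) ⊗ₖ Q))) a b
      = ∑ u, ∑ v, Q u v * M (a, v) (b, u) := by
    simp only [ptr2, Matrix.of_apply, step]
    have expand : ∀ w u : B, (∑ v, Q w v * M (a, v) (b, u)) * Q u w
        = ∑ v, Q u w * Q w v * M (a, v) (b, u) := by
      intro w u
      rw [Finset.sum_mul]
      exact Finset.sum_congr rfl fun v _ => by ring
    simp only [expand]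
    rw [Finset.sum_comm]
    refine Finset.sum_congr rfl fun u _ => ?_
    rw [Finset.sum_comm]
    refine Finset.sum_congr rfl fun v _ => ?_
    rw [← Finset.sum_mul, ← Matrix.mul_apply, hQ]
  rw [hL, hR]

lemma psd_smul_real {n : Type*} [Fintype n] {M : Matrix n n ℂ} (h : M.PosSemidef)
    {c : ℝ} (hc : 0 ≤ c) : (((c : ℂ)) • M).PosSemidef := by
  constructor
  · have := h.isHermitian
    unfold Matrix.IsHermitian at *
    rw [Matrix.conjTranspose_smul, this]
    congr 1
    simp
  · intro x
    have h0 : (0 : ℂ) ≤ (c : ℂ) := by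
      rw [Complex.zero_le_real]
      exact hc
    exact (h.smul h0).2 x

lemma trace_proj {W : Type*} [Fintype W] [DecidableEq W] {Q : Matrix W W ℂ}
    (hQ : Q * Q = Q) : Q.trace = (Q.rank : ℂ) := by
  have hf : Q.mulVecLin ∘ₗ Q.mulVecLin = Q.mulVecLin := by
    rw [← Matrix.mulVecLin_mul, hQ]
  obtain ⟨p, hp⟩ := (LinearMap.isProj_iff_isIdempotentElem Q.mulVecLin).mpr hf
  have hrange : p = LinearMap.range Q.mulVecLin := by
    apply le_antisymm
    · intro x hx
      exact ⟨x, hp.map_id x hx⟩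
    · rintro x ⟨y, rfl⟩
      exact hp.map_mem y
  have htr := hp.trace
  have h1 : LinearMap.trace ℂ (W → ℂ) Q.mulVecLin = Q.trace := by
    rw [LinearMap.trace_eq_matrix_trace ℂ (Pi.basisFun ℂ W), LinearMap.toMatrix_eq_toMatrix']
    rw [← Matrix.toLin'_apply', LinearMap.toMatrix'_toLin']
  rw [h1] at htr
  rw [htr, hrange, Matrix.rank]

/-- **Implementability with a battery implies Gibbs-sub-preservation (easy direction).**
If the effective work process `𝓣(ρ) = tr_W[P' Φ(ρ ⊗ τ)]` arises from a completely positive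
trace-preserving `Φ` with `Φ(Γ_X ⊗ I_W) ≤ Γ_{X'} ⊗ I_W`, battery states `τ = P/e^m`,
`τ' = P'/e^{m'}` (projectors of ranks `e^m = r`, `e^{m'} = r'`) on a dimension-`d` battery
with charge difference `(ln d − m) − (ln d − m') = ln r' − ln r ≤ w`, then
`𝓣(Γ_X) ≤ e^w Γ_{X'}`. -/
theorem battery_implementation_gibbs_sub {X X' W : Type*}
    [Fintype X] [DecidableEq X] [Fintype X'] [DecidableEq X'] [Fintype W] [DecidableEq W]
    (ΓX : Matrix X X ℂ) (ΓX' : Matrix X' X' ℂ)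
    (hΓX : ΓX.PosSemidef) (hΓX' : ΓX'.PosSemidef)
    (T : Matrix X X ℂ →ₗ[ℂ] Matrix X' X' ℂ)
    (hTCP : IsCPfun fun M => T M)
    (hTNI : ∀ ρ : Matrix X X ℂ, ρ.PosSemidef → ((T ρ).trace).re ≤ (ρ.trace).re)
    (w : ℝ) (r r' : ℕ) (hr : 0 < r) (hr' : 0 < r')
    (hrd : r ≤ Fintype.card W)
    (P P' : Matrix W W ℂ)
    (hPh : Pᴴ = P) (hPp : P * P = P) (hPrank : P.rank = r)
    (hP'h : P'ᴴ = P') (hP'p : P' * P' = P') (hP'rank : P'.rank = r')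
    (hcharge : Real.log r' - Real.log r ≤ w)
    (Φ : Matrix (X × W) (X × W) ℂ →ₗ[ℂ] Matrix (X' × W) (X' × W) ℂ)
    (hΦCP : IsCPfun fun M => Φ M)
    (hΦTP : ∀ ω, (Φ ω).trace = ω.trace)
    (hΦΓ : ((ΓX' ⊗ₖ (1 : Matrix W W ℂ)) - Φ (ΓX ⊗ₖ (1 : Matrix W W ℂ))).PosSemidef)
    (hT : ∀ ρ : Matrix X X ℂ,
      T ρ = ptr2 (((1 : Matrix X' X' ℂ) ⊗ₖ P') * Φ (ρ ⊗ₖ (((r : ℂ))⁻¹ • P)))) :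
    (((Real.exp w : ℝ) : ℂ) • ΓX' - T ΓX).PosSemidef := by
  -- `1 - P` is positive semidefinite
  have h1P : ((1 : Matrix W W ℂ) - P).PosSemidef := by
    refine Matrix.posSemidef_iff_eq_transpose_mul_self.mpr ⟨1 - P, ?_⟩
    rw [Matrix.conjTranspose_sub, Matrix.conjTranspose_one, hPh]
    simp only [Matrix.sub_mul, Matrix.mul_sub, hPp, Matrix.one_mul, Matrix.mul_one]
    abel
  -- the Gibbs operator with `P` instead of `1` is still dominated
  have hD : ((ΓX' ⊗ₖ (1 : Matrix W W ℂ)) - Φ (ΓX ⊗ₖ P)).PosSemidef := by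
    have h2 := cp_map_psd Φ hΦCP (kron_psd hΓX h1P)
    have hsplit : ΓX ⊗ₖ (1 : Matrix W W ℂ)
        = ΓX ⊗ₖ P + ΓX ⊗ₖ ((1 : Matrix W W ℂ) - P) := by
      rw [← Matrix.kronecker_add, add_sub_cancel]
    have heq : (ΓX' ⊗ₖ (1 : Matrix W W ℂ)) - Φ (ΓX ⊗ₖ P)
        = ((ΓX' ⊗ₖ (1 : Matrix W W ℂ)) - Φ (ΓX ⊗ₖ (1 : Matrix W W ℂ)))
          + Φ (ΓX ⊗ₖ ((1 : Matrix W W ℂ) - P)) := by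
      rw [hsplit, map_add]
      abel
    rw [heq]
    exact hΦΓ.add h2
  set X1 : Matrix (X' × W) (X' × W) ℂ := (1 : Matrix X' X' ℂ) ⊗ₖ P' with hX1
  have hX1H : X1ᴴ = X1 := by
    rw [hX1, kron_conjT, Matrix.conjTranspose_one, hP'h]
  have hconj : (X1 * ((ΓX' ⊗ₖ (1 : Matrix W W ℂ)) - Φ (ΓX ⊗ₖ P)) * X1).PosSemidef := by
    have := hD.mul_mul_conjTranspose_same X1
    rwa [hX1H] at this
  have hptr := ptr2_psd hconj
  -- identify the partial trace
  have hA1 : X1 * (ΓX' ⊗ₖ (1 : Matrix W W ℂ)) * X1 = ΓX' ⊗ₖ P' := by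
    simp only [hX1, ← Matrix.mul_kronecker_mul, Matrix.one_mul, Matrix.mul_one, hP'p]
  have hTterm : ptr2 (X1 * Φ (ΓX ⊗ₖ P) * X1) = (r : ℂ) • T ΓX := by
    rw [← ptr2_proj hP'p, hT ΓX]
    rw [Matrix.kronecker_smul, _root_.map_smul, Matrix.mul_smul, ptr2_smul, smul_smul]
    rw [mul_inv_cancel₀ (Nat.cast_ne_zero.mpr hr.ne' : (r : ℂ) ≠ 0), one_smul]
  have key : ptr2 (X1 * ((ΓX' ⊗ₖ (1 : Matrix W W ℂ)) - Φ (ΓX ⊗ₖ P)) * X1)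
      = (r' : ℂ) • ΓX' - (r : ℂ) • T ΓX := by
    rw [Matrix.mul_sub, Matrix.sub_mul, ptr2_sub, hA1, ptr2_kron,
      trace_proj hP'p, hP'rank, hTterm]
  rw [key] at hptr
  -- scale by `r⁻¹`
  have hrR : (0:ℝ) < (r : ℝ) := Nat.cast_pos.mpr hr
  have hscaled : ((((r' : ℝ) / (r : ℝ) : ℝ) : ℂ) • ΓX' - T ΓX).PosSemidef := by
    have h3 := psd_smul_real hptr (c := ((r : ℝ))⁻¹) (inv_nonneg.mpr hrR.le)
    have heq : (Complex.ofReal (((r : ℝ))⁻¹)) • ((r' : ℂ) • ΓX' - (r : ℂ) • T ΓX)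
        = (((r' : ℝ) / (r : ℝ) : ℝ) : ℂ) • ΓX' - T ΓX := by
      rw [smul_sub, smul_smul, smul_smul]
      have e1 : (Complex.ofReal (((r : ℝ))⁻¹)) * (r' : ℂ) = (((r' : ℝ) / (r : ℝ) : ℝ) : ℂ) := by
        push_cast
        ring
      have e2 : (Complex.ofReal (((r : ℝ))⁻¹)) * (r : ℂ) = 1 := by
        push_cast
        field_simp
      rw [e1, e2, one_smul]
    rwa [heq] at h3
  -- compare `r'/r` with `exp w`
  have hcoef : (r' : ℝ) / (r : ℝ) ≤ Real.exp w := by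
    have hpos : (0:ℝ) < (r' : ℝ) / (r : ℝ) :=
      div_pos (Nat.cast_pos.mpr hr') hrR
    have hlog : Real.log ((r' : ℝ) / (r : ℝ)) = Real.log r' - Real.log r :=
      Real.log_div (Nat.cast_ne_zero.mpr hr'.ne') (Nat.cast_ne_zero.mpr hr.ne')
    calc (r' : ℝ) / (r : ℝ) = Real.exp (Real.log ((r' : ℝ) / (r : ℝ))) :=
          (Real.exp_log hpos).symm
      _ ≤ Real.exp w := Real.exp_le_exp.mpr (by rw [hlog]; exact hcharge)
  have hdiff : ((Real.exp w : ℝ) : ℂ) • ΓX' - T ΓX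
      = (((Real.exp w - (r' : ℝ) / (r : ℝ) : ℝ)) : ℂ) • ΓX'
        + ((((r' : ℝ) / (r : ℝ) : ℝ) : ℂ) • ΓX' - T ΓX) := by
    push_cast
    rw [sub_smul]
    abel
  rw [hdiff]
  exact (psd_smul_real hΓX' (sub_nonneg.mpr hcoef)).add hscaled
end
end

section
/- Counterexample energy bound (ε = 0 case): on a qubit with Γ = |0⟩⟨0| + e^{−βE₁}|1⟩⟨1| (β, E₁ > 0), consider the channel 𝓔(·) = tr[·] |+⟩⟨+| where |+⟩ = (|0⟩+|1⟩)/√2. The smallest α ≥ 0 such that 𝓔(Γ) ≤ α Γ satisfies α ≥ e^{βE₁}/2; hence ln α ≥ βE₁ − ln 2. -/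
open Matrix
open scoped ComplexOrder

noncomputable section

/-- The Gibbs operator `Γ = |0⟩⟨0| + e^{−βE₁}|1⟩⟨1|` on a qubit. -/
def Γmat (β E₁ : ℝ) : Matrix (Fin 2) (Fin 2) ℂ :=
  Matrix.diagonal ![1, ((Real.exp (-(β * E₁)) : ℝ) : ℂ)]

/-- The projector `|+⟩⟨+|` onto `|+⟩ = (|0⟩ + |1⟩)/√2`. -/
def plusProj : Matrix (Fin 2) (Fin 2) ℂ :=
  Matrix.of fun _ _ => (1 / 2 : ℂ)

/-- **Counterexample energy bound (ε = 0 case).** For the channel `𝓔(·) = tr[·]|+⟩⟨+|` on a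
qubit with `Γ = |0⟩⟨0| + e^{−βE₁}|1⟩⟨1|`, any `α ≥ 0` with `𝓔(Γ) = tr(Γ)|+⟩⟨+| ≤ αΓ`
satisfies `α ≥ e^{βE₁}/2`, hence `ln α ≥ βE₁ − ln 2`. -/
theorem counterexample_energy_bound (β E₁ : ℝ) (hβ : 0 < β) (hE : 0 < E₁)
    (α : ℝ) (hα : 0 ≤ α)
    (h : (((α : ℝ) : ℂ) • Γmat β E₁ - (Γmat β E₁).trace • plusProj).PosSemidef) :
    Real.exp (β * E₁) / 2 ≤ α ∧ β * E₁ - Real.log 2 ≤ Real.log α := by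
  have key := h.dotProduct_mulVec_nonneg (Pi.single 1 1)
  simp only [Γmat, plusProj, dotProduct, Matrix.mulVec, Fin.sum_univ_two,
    Matrix.sub_apply, Matrix.smul_apply, Matrix.diagonal_apply, Matrix.trace,
    Matrix.diag, Pi.single_apply, Matrix.of_apply] at key
  norm_num at key
  rw [show (-(↑β * ↑E₁) : ℂ) = ((-(β * E₁) : ℝ) : ℂ) by push_cast; ring,
    ← Complex.ofReal_exp] at key
  set e := Real.exp (-(β * E₁)) with he
  have he0 : 0 < e := Real.exp_pos _
  have keyR : (1 + e) * (1 / 2) ≤ α * e := by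
    have := key
    rw [show ((1 : ℂ) + e) * (1/2) = (((1 + e) * (1/2) : ℝ) : ℂ) by push_cast; ring,
      show ((α : ℂ) * e) = (((α * e : ℝ)) : ℂ) by push_cast; ring,
      Complex.real_le_real] at this
    exact this
  have hee : e * Real.exp (β * E₁) = 1 := by
    rw [he, ← Real.exp_add]; simp
  have h1 : Real.exp (β * E₁) / 2 ≤ α := by
    have h2 : (1 + e) * (1 / 2) / e ≤ α := by
      rw [div_le_iff₀ he0] at *; linarith [keyR]
    calc Real.exp (β * E₁) / 2 ≤ (1 + e) * (1 / 2) / e := by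
          rw [le_div_iff₀ he0]
          have : e * Real.exp (β * E₁) = 1 := hee
          nlinarith
      _ ≤ α := h2
  refine ⟨h1, ?_⟩
  have hpos : 0 < Real.exp (β * E₁) / 2 := by positivity
  calc β * E₁ - Real.log 2 = Real.log (Real.exp (β * E₁) / 2) := by
        rw [Real.log_div (Real.exp_ne_zero _) two_ne_zero, Real.log_exp]
    _ ≤ Real.log α := Real.log_le_log hpos h1
end
end
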